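/- Suppose (ψ̄, ψσ, ψσ²) is a smooth solution of the IL^(0,1)QG equations on ℝ × [0,W] × ℝ, with all three fields L-periodic in x, with ∂ₓψ̄ = ∂ₓψσ = ∂ₓψσ² = 0 on both channel walls y = 0 and y = W, and with constant wall circulations, i.e. t ↦ ∫₀ᴸ ∂_yψ̄(x,0,t) dx and t ↦ ∫₀ᴸ ∂_yψ̄(x,W,t) dx are constant. Then the energy E(t) := (1/2) ∫₀ᵂ ∫₀ᴸ [ |∇ψ̄(x,y,t)|² + R_S⁻² ψ̄(x,y,t)² ] dx dy is constant in time. -/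

import Mathlib

/-- Partial derivative in `x` of a field of `(x, y, t)`. -/
noncomputable def px (f : ℝ → ℝ → ℝ → ℝ) (x y t : ℝ) : ℝ := deriv (fun x' => f x' y t) x

/-- Partial derivative in `y` of a field of `(x, y, t)`. -/
noncomputable def py (f : ℝ → ℝ → ℝ → ℝ) (x y t : ℝ) : ℝ := deriv (fun y' => f x y' t) y

/-- Partial derivative in `t` of a field of `(x, y, t)`. -/
noncomputable def pt (f : ℝ → ℝ → ℝ → ℝ) (x y t : ℝ) : ℝ := deriv (fun t' => f x y t') t

/-- Second partial derivative in `x`. -/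
noncomputable def pxx (f : ℝ → ℝ → ℝ → ℝ) (x y t : ℝ) : ℝ := deriv (fun x' => px f x' y t) x

/-- Second partial derivative in `y`. -/
noncomputable def pyy (f : ℝ → ℝ → ℝ → ℝ) (x y t : ℝ) : ℝ := deriv (fun y' => py f x y' t) y

/-- Jacobian bracket `{a,b} = ∂ₓa ∂_yb − ∂_ya ∂ₓb` of two fields of `(x, y, t)`. -/
noncomputable def jac (a b : ℝ → ℝ → ℝ → ℝ) (x y t : ℝ) : ℝ :=
  px a x y t * py b x y t - py a x y t * px b x y t

/-- Potential vorticity `ξ̄ = ∇²ψ̄ − R_S⁻²(ψ̄ − ψσ + (2/3)ψσ²) + βy`. -/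
noncomputable def xibar (RS β : ℝ) (ψb ψσ ψσ2 : ℝ → ℝ → ℝ → ℝ) (x y t : ℝ) : ℝ :=
  pxx ψb x y t + pyy ψb x y t
    - (RS ^ 2)⁻¹ * (ψb x y t - ψσ x y t + 2 / 3 * ψσ2 x y t) + β * y

/-- A field of `(x, y, t)` is smooth (infinitely differentiable as a function on `ℝ³`). -/
def Smooth3 (f : ℝ → ℝ → ℝ → ℝ) : Prop :=
  ContDiff ℝ (⊤ : ℕ∞) (fun z : ℝ × ℝ × ℝ => f z.1 z.2.1 z.2.2)

/-- `L`-periodicity in the zonal direction `x`. -/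
def PeriodicX (L : ℝ) (f : ℝ → ℝ → ℝ → ℝ) : Prop :=
  ∀ x y t : ℝ, f (x + L) y t = f x y t

/-- The IL⁽⁰'¹⁾QG equations on the channel `ℝ × [0,W] × ℝ`:
`∂ₜξ̄ + {ψ̄, ξ̄ − R_S⁻²(ψσ − (2/3)ψσ²)} = 0`, `∂ₜψσ + {ψ̄, ψσ} = 0`,
`∂ₜψσ² + {ψ̄, ψσ²} = 0`. -/
def IL01QG (RS β W : ℝ) (ψb ψσ ψσ2 : ℝ → ℝ → ℝ → ℝ) : Prop :=
  ∀ x t : ℝ, ∀ y ∈ Set.Icc (0:ℝ) W,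
    pt (xibar RS β ψb ψσ ψσ2) x y t
      + jac ψb (fun x' y' t' => xibar RS β ψb ψσ ψσ2 x' y' t'
          - (RS ^ 2)⁻¹ * (ψσ x' y' t' - 2 / 3 * ψσ2 x' y' t')) x y t = 0 ∧
    pt ψσ x y t + jac ψb ψσ x y t = 0 ∧
    pt ψσ2 x y t + jac ψb ψσ2 x y t = 0

/-- No-normal-flow boundary condition: `∂ₓψ̄ = 0` on both channel walls. -/
def NoNormalFlow (W : ℝ) (ψb : ℝ → ℝ → ℝ → ℝ) : Prop :=
  ∀ x t : ℝ, px ψb x 0 t = 0 ∧ px ψb x W t = 0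

/-!
Multiplying the vorticity equation by ψ̄ and using the two tracer equations turns the time
derivative of the energy density into a divergence ∂ₓA + ∂_yB: the Jacobian terms combine into
2ψ̄{ψ̄, H} = {ψ̄², H} with H = ξ̄ − 2R_S⁻²(ψσ − (2/3)ψσ²). The zonal flux A is L-periodic, so
∂ₓA integrates to zero over a period. On a wall ∂ₓψ̄ = 0, so B reduces to 2ψ̄ ∂ₜ∂_yψ̄ with ψ̄
constant along the wall, and its integral is 2ψ̄ times the time derivative of the wall
circulation, which vanishes.
-/

open MeasureTheory Set Function intervalIntegral

section Calculus

variable {E F : Type*} [NormedAddCommGroup E] [NormedSpace ℝ E]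
  [NormedAddCommGroup F] [NormedSpace ℝ F]

theorem fderiv_fderiv_apply_comm {g : E → F} (hg : ContDiff ℝ 2 g) (p v w : E) :
    fderiv ℝ (fun q => fderiv ℝ g q w) p v = fderiv ℝ (fun q => fderiv ℝ g q v) p w := by
  have hd : Differentiable ℝ (fderiv ℝ g) :=
    (hg.fderiv_right (m := 1) le_rfl).differentiable one_ne_zero
  have happly : ∀ u : E, fderiv ℝ (fun q => fderiv ℝ g q u) p = (fderiv ℝ (fderiv ℝ g) p).flip u :=
    fun u => by simp [fderiv_clm_apply (hd p) (differentiableAt_const u)]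
  simpa [happly] using (hg.contDiffAt.isSymmSndFDerivAt (by simp)) v w

theorem hasDerivAt_intervalIntegral_of_continuous {G G' : ℝ → ℝ → F}
    (hG : Continuous (uncurry G)) (hG' : Continuous (uncurry G'))
    (hderiv : ∀ t x, HasDerivAt (fun s => G s x) (G' t x) t) (a b t₀ : ℝ) :
    HasDerivAt (fun t => ∫ x in a..b, G t x) (∫ x in a..b, G' t₀ x) t₀ := by
  obtain ⟨C, hC⟩ := ((isCompact_closedBall t₀ 1).prod isCompact_uIcc).exists_bound_of_continuousOn
    (hG'.continuousOn (s := Metric.closedBall t₀ 1 ×ˢ uIcc a b))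
  refine (hasDerivAt_integral_of_dominated_loc_of_deriv_le (bound := fun _ => C)
    (Metric.ball_mem_nhds t₀ one_pos) (.of_forall fun t => (hG.uncurry_left t).aestronglyMeasurable)
    ((hG.uncurry_left t₀).intervalIntegrable a b) (hG'.uncurry_left t₀).aestronglyMeasurable
    (.of_forall fun x hx s hs => hC (s, x) ⟨Metric.ball_subset_closedBall hs, uIoc_subset_uIcc hx⟩)
    intervalIntegrable_const (.of_forall fun x _ s _ => hderiv s x)).2

end Calculus

def uncurry3 (f : ℝ → ℝ → ℝ → ℝ) : ℝ × ℝ × ℝ → ℝ := fun z => f z.1 z.2.1 z.2.2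

variable {f : ℝ → ℝ → ℝ → ℝ} {L : ℝ}

namespace Smooth3

theorem contDiff_two (hf : Smooth3 f) : ContDiff ℝ 2 (uncurry3 f) :=
  ContDiff.of_le hf (WithTop.coe_le_coe.mpr le_top)

theorem differentiable (hf : Smooth3 f) : Differentiable ℝ (uncurry3 f) :=
  ContDiff.differentiable hf (by simp)

theorem continuous (hf : Smooth3 f) : Continuous (uncurry3 f) :=
  ContDiff.continuous hf

theorem hasFDerivAt (hf : Smooth3 f) (p : ℝ × ℝ × ℝ) :
    HasFDerivAt (uncurry3 f) (fderiv ℝ (uncurry3 f) p) p :=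
  (hf.differentiable p).hasFDerivAt

theorem hasDerivAt_x (hf : Smooth3 f) (x y t : ℝ) :
    HasDerivAt (fun x' => f x' y t) (fderiv ℝ (uncurry3 f) (x, y, t) (1, 0, 0)) x :=
  (hf.hasFDerivAt _).comp_hasDerivAt x ((hasDerivAt_id x).prodMk (hasDerivAt_const x (y, t)))

theorem hasDerivAt_y (hf : Smooth3 f) (x y t : ℝ) :
    HasDerivAt (fun y' => f x y' t) (fderiv ℝ (uncurry3 f) (x, y, t) (0, 1, 0)) y :=
  (hf.hasFDerivAt _).comp_hasDerivAt y
    ((hasDerivAt_const y x).prodMk ((hasDerivAt_id y).prodMk (hasDerivAt_const y t)))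

theorem hasDerivAt_t (hf : Smooth3 f) (x y t : ℝ) :
    HasDerivAt (fun t' => f x y t') (fderiv ℝ (uncurry3 f) (x, y, t) (0, 0, 1)) t :=
  (hf.hasFDerivAt _).comp_hasDerivAt t
    ((hasDerivAt_const t x).prodMk ((hasDerivAt_const t y).prodMk (hasDerivAt_id t)))

theorem hasDerivAt_px (hf : Smooth3 f) (x y t : ℝ) :
    HasDerivAt (fun x' => f x' y t) (px f x y t) x :=
  (hf.hasDerivAt_x x y t).differentiableAt.hasDerivAt

theorem hasDerivAt_py (hf : Smooth3 f) (x y t : ℝ) :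
    HasDerivAt (fun y' => f x y' t) (py f x y t) y :=
  (hf.hasDerivAt_y x y t).differentiableAt.hasDerivAt

theorem hasDerivAt_pt (hf : Smooth3 f) (x y t : ℝ) :
    HasDerivAt (fun t' => f x y t') (pt f x y t) t :=
  (hf.hasDerivAt_t x y t).differentiableAt.hasDerivAt

theorem uncurry3_px (hf : Smooth3 f) :
    uncurry3 (px f) = fun p => fderiv ℝ (uncurry3 f) p (1, 0, 0) :=
  funext fun p => (hf.hasDerivAt_x p.1 p.2.1 p.2.2).deriv

theorem uncurry3_py (hf : Smooth3 f) :
    uncurry3 (py f) = fun p => fderiv ℝ (uncurry3 f) p (0, 1, 0) :=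
  funext fun p => (hf.hasDerivAt_y p.1 p.2.1 p.2.2).deriv

theorem uncurry3_pt (hf : Smooth3 f) :
    uncurry3 (pt f) = fun p => fderiv ℝ (uncurry3 f) p (0, 0, 1) :=
  funext fun p => (hf.hasDerivAt_t p.1 p.2.1 p.2.2).deriv

theorem contDiff_fderiv_apply (hf : Smooth3 f) (v : ℝ × ℝ × ℝ) :
    ContDiff ℝ (⊤ : ℕ∞) fun p => fderiv ℝ (uncurry3 f) p v :=
  (ContDiff.fderiv_right hf (mod_cast le_top)).clm_apply contDiff_const

end Smooth3

theorem smooth3_px (hf : Smooth3 f) : Smooth3 (px f) := by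
  show ContDiff ℝ _ (uncurry3 (px f))
  rw [hf.uncurry3_px]; exact hf.contDiff_fderiv_apply _

theorem smooth3_py (hf : Smooth3 f) : Smooth3 (py f) := by
  show ContDiff ℝ _ (uncurry3 (py f))
  rw [hf.uncurry3_py]; exact hf.contDiff_fderiv_apply _

theorem smooth3_pt (hf : Smooth3 f) : Smooth3 (pt f) := by
  show ContDiff ℝ _ (uncurry3 (pt f))
  rw [hf.uncurry3_pt]; exact hf.contDiff_fderiv_apply _

theorem px_py_comm (hf : Smooth3 f) (x y t : ℝ) : px (py f) x y t = py (px f) x y t := by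
  refine ((smooth3_py hf).hasDerivAt_x x y t).deriv.trans
    (.trans ?_ ((smooth3_px hf).hasDerivAt_y x y t).deriv.symm)
  rw [hf.uncurry3_py, hf.uncurry3_px]
  exact fderiv_fderiv_apply_comm hf.contDiff_two _ _ _

theorem px_pt_comm (hf : Smooth3 f) (x y t : ℝ) : px (pt f) x y t = pt (px f) x y t := by
  refine ((smooth3_pt hf).hasDerivAt_x x y t).deriv.trans
    (.trans ?_ ((smooth3_px hf).hasDerivAt_t x y t).deriv.symm)
  rw [hf.uncurry3_pt, hf.uncurry3_px]
  exact fderiv_fderiv_apply_comm hf.contDiff_two _ _ _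

theorem py_pt_comm (hf : Smooth3 f) (x y t : ℝ) : py (pt f) x y t = pt (py f) x y t := by
  refine ((smooth3_pt hf).hasDerivAt_y x y t).deriv.trans
    (.trans ?_ ((smooth3_py hf).hasDerivAt_t x y t).deriv.symm)
  rw [hf.uncurry3_pt, hf.uncurry3_py]
  exact fderiv_fderiv_apply_comm hf.contDiff_two _ _ _

theorem Smooth3.continuous_comp {X : Type*} [TopologicalSpace X] (hf : Smooth3 f)
    {a b c : X → ℝ} (ha : Continuous a) (hb : Continuous b) (hc : Continuous c) :
    Continuous fun p => f (a p) (b p) (c p) :=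
  hf.continuous.comp (ha.prodMk (hb.prodMk hc))

theorem Smooth3.intervalIntegrable_x (hf : Smooth3 f) (y t a b : ℝ) :
    IntervalIntegrable (fun x => f x y t) volume a b :=
  (hf.continuous_comp continuous_id continuous_const continuous_const).intervalIntegrable a b

theorem Smooth3.intervalIntegrable_y (hf : Smooth3 f) (x t a b : ℝ) :
    IntervalIntegrable (fun y => f x y t) volume a b :=
  (hf.continuous_comp continuous_const continuous_id continuous_const).intervalIntegrable a b

theorem Smooth3.hasDerivAt_integral (hf : Smooth3 f) (y a b t₀ : ℝ) :
    HasDerivAt (fun t => ∫ x in a..b, f x y t) (∫ x in a..b, pt f x y t₀) t₀ :=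
  hasDerivAt_intervalIntegral_of_continuous (G := fun t x => f x y t) (G' := fun t x => pt f x y t)
    (hf.continuous_comp continuous_snd continuous_const continuous_fst)
    ((smooth3_pt hf).continuous_comp continuous_snd continuous_const continuous_fst)
    (fun t x => hf.hasDerivAt_pt x y t) a b t₀

theorem Smooth3.hasDerivAt_integral_integral (hf : Smooth3 f) (a b c d t₀ : ℝ) :
    HasDerivAt (fun t => ∫ y in c..d, ∫ x in a..b, f x y t)
      (∫ y in c..d, ∫ x in a..b, pt f x y t₀) t₀ :=
  hasDerivAt_intervalIntegral_of_continuous (G := fun t y => ∫ x in a..b, f x y t)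
    (G' := fun t y => ∫ x in a..b, pt f x y t)
    (continuous_parametric_intervalIntegral_of_continuous' (f := fun (p : ℝ × ℝ) x => f x p.2 p.1)
      (hf.continuous_comp continuous_snd (by fun_prop) (by fun_prop)) a b)
    (continuous_parametric_intervalIntegral_of_continuous'
      (f := fun (p : ℝ × ℝ) x => pt f x p.2 p.1)
      ((smooth3_pt hf).continuous_comp continuous_snd (by fun_prop) (by fun_prop)) a b)
    (fun t y => hf.hasDerivAt_integral y a b t) c d t₀

namespace PeriodicX

theorem px (hf : PeriodicX L f) : PeriodicX L (px f) := fun x y t =>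
  (deriv_comp_add_const (fun x' => f x' y t) L x).symm.trans
    (congrArg (deriv · x) (funext fun x' => hf x' y t))

theorem py (hf : PeriodicX L f) : PeriodicX L (py f) := fun x y t =>
  congrArg (deriv · y) (funext fun y' => hf x y' t)

theorem pt (hf : PeriodicX L f) : PeriodicX L (pt f) := fun x y t =>
  congrArg (deriv · t) (funext fun t' => hf x y t')

theorem integral_px_eq_zero (hper : PeriodicX L f) (hf : Smooth3 f) (y t : ℝ) :
    ∫ x in 0..L, _root_.px f x y t = 0 := by
  rw [integral_eq_sub_of_hasDerivAt (fun x _ => hf.hasDerivAt_px x y t)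
    ((smooth3_px hf).intervalIntegrable_x y t 0 L), sub_eq_zero]
  simpa using hper 0 y t

end PeriodicX

theorem integral_integral_px_add_py {A B : ℝ → ℝ → ℝ → ℝ} (hA : Smooth3 A) (hB : Smooth3 B)
    (hper : PeriodicX L A) (c d t : ℝ) :
    ∫ y in c..d, ∫ x in 0..L, (px A x y t + py B x y t)
      = (∫ x in 0..L, B x d t) - ∫ x in 0..L, B x c t := by
  have hperiod : ∀ y, ∫ x in 0..L, (px A x y t + py B x y t) = ∫ x in 0..L, py B x y t :=
    fun y => by
      rw [integral_add ((smooth3_px hA).intervalIntegrable_x y t 0 L)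
        ((smooth3_py hB).intervalIntegrable_x y t 0 L), hper.integral_px_eq_zero hA, zero_add]
  have hwalls : ∀ x, ∫ y in c..d, py B x y t = B x d t - B x c t := fun x =>
    integral_eq_sub_of_hasDerivAt (fun y _ => hB.hasDerivAt_py x y t)
      ((smooth3_py hB).intervalIntegrable_y x t c d)
  have hfubini : IntegrableOn (uncurry fun y x => py B x y t) (uIoc c d ×ˢ uIoc 0 L) :=
    ((smooth3_py hB).continuous_comp continuous_snd continuous_fst continuous_const
      |>.continuousOn.integrableOn_compact (isCompact_uIcc.prod isCompact_uIcc)).mono_set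
      (prod_mono uIoc_subset_uIcc uIoc_subset_uIcc)
  simp only [hperiod]
  rw [intervalIntegral_intervalIntegral_swap hfubini, integral_congr fun x _ => hwalls x,
    integral_sub (hB.intervalIntegrable_x d t 0 L) (hB.intervalIntegrable_x c t 0 L)]

noncomputable def energyDensity (RS : ℝ) (u : ℝ → ℝ → ℝ → ℝ) (x y t : ℝ) : ℝ :=
  px u x y t ^ 2 + py u x y t ^ 2 + (RS ^ 2)⁻¹ * u x y t ^ 2

-- The vorticity equation advects `xibarShift (R_S⁻²)`; the energy fluxes carry
-- `xibarShift (2R_S⁻²)`.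
noncomputable def xibarShift (c RS β : ℝ) (u σ τ : ℝ → ℝ → ℝ → ℝ) (x y t : ℝ) : ℝ :=
  xibar RS β u σ τ x y t - c * (σ x y t - 2 / 3 * τ x y t)

noncomputable def energyFluxX (RS β : ℝ) (u σ τ : ℝ → ℝ → ℝ → ℝ) (x y t : ℝ) : ℝ :=
  2 * u x y t * pt (px u) x y t
    - 2 * xibarShift (2 * (RS ^ 2)⁻¹) RS β u σ τ x y t * u x y t * py u x y t

noncomputable def energyFluxY (RS β : ℝ) (u σ τ : ℝ → ℝ → ℝ → ℝ) (x y t : ℝ) : ℝ :=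
  2 * u x y t * pt (py u) x y t
    + 2 * xibarShift (2 * (RS ^ 2)⁻¹) RS β u σ τ x y t * u x y t * px u x y t

section Model

variable {u σ τ : ℝ → ℝ → ℝ → ℝ} {c RS β W : ℝ}

theorem smooth3_energyDensity (hu : Smooth3 u) : Smooth3 (energyDensity RS u) := by
  have := smooth3_px hu; have := smooth3_py hu
  unfold Smooth3 energyDensity at *; fun_prop

theorem smooth3_xibar (hu : Smooth3 u) (hσ : Smooth3 σ) (hτ : Smooth3 τ) :
    Smooth3 (xibar RS β u σ τ) := by
  have : Smooth3 (pxx u) := smooth3_px (smooth3_px hu)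
  have : Smooth3 (pyy u) := smooth3_py (smooth3_py hu)
  unfold Smooth3 xibar at *; fun_prop

theorem smooth3_xibarShift (hu : Smooth3 u) (hσ : Smooth3 σ) (hτ : Smooth3 τ) :
    Smooth3 (xibarShift c RS β u σ τ) := by
  have := smooth3_xibar (RS := RS) (β := β) hu hσ hτ
  unfold Smooth3 xibarShift at *; fun_prop

theorem smooth3_energyFluxX (hu : Smooth3 u) (hσ : Smooth3 σ) (hτ : Smooth3 τ) :
    Smooth3 (energyFluxX RS β u σ τ) := by
  have := smooth3_xibarShift (c := 2 * (RS ^ 2)⁻¹) (RS := RS) (β := β) hu hσ hτ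
  have := smooth3_pt (smooth3_px hu); have := smooth3_py hu
  unfold Smooth3 energyFluxX at *; fun_prop

theorem smooth3_energyFluxY (hu : Smooth3 u) (hσ : Smooth3 σ) (hτ : Smooth3 τ) :
    Smooth3 (energyFluxY RS β u σ τ) := by
  have := smooth3_xibarShift (c := 2 * (RS ^ 2)⁻¹) (RS := RS) (β := β) hu hσ hτ
  have := smooth3_pt (smooth3_py hu); have := smooth3_px hu
  unfold Smooth3 energyFluxY at *; fun_prop

theorem pt_xibar (hu : Smooth3 u) (hσ : Smooth3 σ) (hτ : Smooth3 τ) (x y t : ℝ) :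
    pt (xibar RS β u σ τ) x y t = pt (px (px u)) x y t + pt (py (py u)) x y t
      - (RS ^ 2)⁻¹ * (pt u x y t - pt σ x y t + 2 / 3 * pt τ x y t) := by
  refine ((((smooth3_px (smooth3_px hu)).hasDerivAt_pt x y t).add
    ((smooth3_py (smooth3_py hu)).hasDerivAt_pt x y t)).sub
    ((((hu.hasDerivAt_pt x y t).sub (hσ.hasDerivAt_pt x y t)).add
      ((hτ.hasDerivAt_pt x y t).const_mul (2 / 3))).const_mul (RS ^ 2)⁻¹)).add_const (β * y)
    |>.deriv

theorem px_xibarShift (hu : Smooth3 u) (hσ : Smooth3 σ) (hτ : Smooth3 τ) (x y t : ℝ) :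
    px (xibarShift c RS β u σ τ) x y t
      = px (xibar RS β u σ τ) x y t - c * (px σ x y t - 2 / 3 * px τ x y t) :=
  (((smooth3_xibar hu hσ hτ).hasDerivAt_px x y t).sub (((hσ.hasDerivAt_px x y t).sub
    ((hτ.hasDerivAt_px x y t).const_mul (2 / 3))).const_mul c)).deriv

theorem py_xibarShift (hu : Smooth3 u) (hσ : Smooth3 σ) (hτ : Smooth3 τ) (x y t : ℝ) :
    py (xibarShift c RS β u σ τ) x y t
      = py (xibar RS β u σ τ) x y t - c * (py σ x y t - 2 / 3 * py τ x y t) :=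
  (((smooth3_xibar hu hσ hτ).hasDerivAt_py x y t).sub (((hσ.hasDerivAt_py x y t).sub
    ((hτ.hasDerivAt_py x y t).const_mul (2 / 3))).const_mul c)).deriv

theorem pt_energyDensity (hu : Smooth3 u) (x y t : ℝ) :
    pt (energyDensity RS u) x y t = 2 * px u x y t * pt (px u) x y t
      + 2 * py u x y t * pt (py u) x y t + 2 * (RS ^ 2)⁻¹ * u x y t * pt u x y t := by
  refine (((((smooth3_px hu).hasDerivAt_pt x y t).pow 2).add
    (((smooth3_py hu).hasDerivAt_pt x y t).pow 2)).add
    (((hu.hasDerivAt_pt x y t).pow 2).const_mul (RS ^ 2)⁻¹)).deriv.trans ?_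
  ring

theorem px_energyFluxX (hu : Smooth3 u) (hσ : Smooth3 σ) (hτ : Smooth3 τ) (x y t : ℝ) :
    px (energyFluxX RS β u σ τ) x y t
      = 2 * px u x y t * pt (px u) x y t + 2 * u x y t * pt (px (px u)) x y t
        - 2 * (px (xibarShift (2 * (RS ^ 2)⁻¹) RS β u σ τ) x y t * u x y t * py u x y t
          + xibarShift (2 * (RS ^ 2)⁻¹) RS β u σ τ x y t
            * (px u x y t * py u x y t + u x y t * py (px u) x y t)) := by
  rw [← px_pt_comm (smooth3_px hu), ← px_py_comm hu]
  refine ((((hu.hasDerivAt_px x y t).const_mul 2).mul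
    ((smooth3_pt (smooth3_px hu)).hasDerivAt_px x y t)).sub
    (((((smooth3_xibarShift hu hσ hτ).hasDerivAt_px x y t).const_mul 2).mul
      (hu.hasDerivAt_px x y t)).mul ((smooth3_py hu).hasDerivAt_px x y t))).deriv.trans ?_
  simp only [Pi.mul_apply]; ring

theorem py_energyFluxY (hu : Smooth3 u) (hσ : Smooth3 σ) (hτ : Smooth3 τ) (x y t : ℝ) :
    py (energyFluxY RS β u σ τ) x y t
      = 2 * py u x y t * pt (py u) x y t + 2 * u x y t * pt (py (py u)) x y t
        + 2 * (py (xibarShift (2 * (RS ^ 2)⁻¹) RS β u σ τ) x y t * u x y t * px u x y t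
          + xibarShift (2 * (RS ^ 2)⁻¹) RS β u σ τ x y t
            * (py u x y t * px u x y t + u x y t * py (px u) x y t)) := by
  rw [← py_pt_comm (smooth3_py hu)]
  refine ((((hu.hasDerivAt_py x y t).const_mul 2).mul
    ((smooth3_pt (smooth3_py hu)).hasDerivAt_py x y t)).add
    (((((smooth3_xibarShift hu hσ hτ).hasDerivAt_py x y t).const_mul 2).mul
      (hu.hasDerivAt_py x y t)).mul ((smooth3_px hu).hasDerivAt_py x y t))).deriv.trans ?_
  simp only [Pi.mul_apply]; ring

theorem pt_energyDensity_eq_px_add_py (hu : Smooth3 u) (hσ : Smooth3 σ) (hτ : Smooth3 τ)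
    (heqs : IL01QG RS β W u σ τ) {y : ℝ} (hy : y ∈ Icc 0 W) (x t : ℝ) :
    pt (energyDensity RS u) x y t
      = px (energyFluxX RS β u σ τ) x y t + py (energyFluxY RS β u σ τ) x y t := by
  obtain ⟨hξt, hσt, hτt⟩ := heqs x t y hy
  change pt (xibar RS β u σ τ) x y t + jac u (xibarShift (RS ^ 2)⁻¹ RS β u σ τ) x y t = 0 at hξt
  rw [jac, pt_xibar hu hσ hτ, px_xibarShift hu hσ hτ, py_xibarShift hu hσ hτ] at hξt
  rw [jac] at hσt hτt
  rw [pt_energyDensity hu, px_energyFluxX hu hσ hτ, py_energyFluxY hu hσ hτ,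
    px_xibarShift hu hσ hτ, py_xibarShift hu hσ hτ]
  linear_combination (-2 * u x y t) * hξt + 2 * (RS ^ 2)⁻¹ * u x y t * hσt
    - 4 / 3 * (RS ^ 2)⁻¹ * u x y t * hτt

theorem PeriodicX.xibar (hu : PeriodicX L u) (hσ : PeriodicX L σ) (hτ : PeriodicX L τ) :
    PeriodicX L (xibar RS β u σ τ) := fun x y t => by
  have hxx : pxx u (x + L) y t = pxx u x y t := hu.px.px x y t
  have hyy : pyy u (x + L) y t = pyy u x y t := hu.py.py x y t
  simp only [_root_.xibar, hxx, hyy, hu x y t, hσ x y t, hτ x y t]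

theorem PeriodicX.energyFluxX (hu : PeriodicX L u) (hσ : PeriodicX L σ) (hτ : PeriodicX L τ) :
    PeriodicX L (energyFluxX RS β u σ τ) := fun x y t => by
  simp only [_root_.energyFluxX, xibarShift, (hu.xibar hσ hτ) x y t, hu x y t, hσ x y t,
    hτ x y t, hu.px.pt x y t, hu.py x y t]

theorem integral_energyFluxY_eq_zero_of_wall (hu : Smooth3 u) {yw t : ℝ}
    (hwall : ∀ x, px u x yw t = 0)
    (hcirc : ∀ s, ∫ x in 0..L, py u x yw s = ∫ x in 0..L, py u x yw t) :
    ∫ x in 0..L, energyFluxY RS β u σ τ x yw t = 0 := by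
  have hconst : ∀ x, u x yw t = u 0 yw t := fun x =>
    is_const_of_deriv_eq_zero (fun x => (hu.hasDerivAt_px x yw t).differentiableAt) hwall x 0
  have hcirc_deriv : ∫ x in 0..L, pt (py u) x yw t = 0 := by
    have h := (smooth3_py hu).hasDerivAt_integral yw 0 L t
    rw [funext hcirc] at h
    exact h.unique (hasDerivAt_const t _)
  calc ∫ x in 0..L, energyFluxY RS β u σ τ x yw t
      = ∫ x in 0..L, 2 * u 0 yw t * pt (py u) x yw t :=
        integral_congr fun x _ => by simp only [energyFluxY, hwall x, hconst x, mul_zero, add_zero]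
    _ = 0 := by rw [intervalIntegral.integral_const_mul, hcirc_deriv, mul_zero]

theorem integral_integral_pt_energyDensity_eq_zero (hW : 0 ≤ W) (hu : Smooth3 u)
    (hσ : Smooth3 σ) (hτ : Smooth3 τ) (hperu : PeriodicX L u) (hperσ : PeriodicX L σ)
    (hperτ : PeriodicX L τ) (heqs : IL01QG RS β W u σ τ) {t : ℝ}
    (hwall0 : ∀ x, px u x 0 t = 0) (hwallW : ∀ x, px u x W t = 0)
    (hcirc0 : ∀ s, ∫ x in 0..L, py u x 0 s = ∫ x in 0..L, py u x 0 t)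
    (hcircW : ∀ s, ∫ x in 0..L, py u x W s = ∫ x in 0..L, py u x W t) :
    ∫ y in 0..W, ∫ x in 0..L, pt (energyDensity RS u) x y t = 0 :=
  calc ∫ y in 0..W, ∫ x in 0..L, pt (energyDensity RS u) x y t
      = ∫ y in 0..W, ∫ x in 0..L,
          (px (energyFluxX RS β u σ τ) x y t + py (energyFluxY RS β u σ τ) x y t) :=
        integral_congr fun y hy => integral_congr fun x _ =>
          pt_energyDensity_eq_px_add_py hu hσ hτ heqs (by rwa [uIcc_of_le hW] at hy) x t
    _ = (∫ x in 0..L, energyFluxY RS β u σ τ x W t) - ∫ x in 0..L, energyFluxY RS β u σ τ x 0 t :=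
        integral_integral_px_add_py (smooth3_energyFluxX hu hσ hτ) (smooth3_energyFluxY hu hσ hτ)
          (hperu.energyFluxX hperσ hperτ) 0 W t
    _ = 0 := by
        rw [integral_energyFluxY_eq_zero_of_wall hu hwallW hcircW,
          integral_energyFluxY_eq_zero_of_wall hu hwall0 hcirc0, sub_zero]

end Model

theorem energy_conserved_general
    (L W β RS : ℝ) (hW : 0 < W)
    (ψb ψσ ψσ2 : ℝ → ℝ → ℝ → ℝ)
    (hψb : Smooth3 ψb) (hψσ : Smooth3 ψσ) (hψσ2 : Smooth3 ψσ2)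
    (hperb : PeriodicX L ψb) (hperσ : PeriodicX L ψσ) (hperσ2 : PeriodicX L ψσ2)
    (heqs : IL01QG RS β W ψb ψσ ψσ2)
    (hwalls : ∀ x t : ℝ, ∀ yw ∈ ({0, W} : Set ℝ),
      px ψb x yw t = 0 ∧ px ψσ x yw t = 0 ∧ px ψσ2 x yw t = 0)
    (hcirc0 : ∀ t₁ t₂ : ℝ,
      (∫ x in (0:ℝ)..L, py ψb x 0 t₁) = ∫ x in (0:ℝ)..L, py ψb x 0 t₂)
    (hcircW : ∀ t₁ t₂ : ℝ,
      (∫ x in (0:ℝ)..L, py ψb x W t₁) = ∫ x in (0:ℝ)..L, py ψb x W t₂) :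
    ∀ t₁ t₂ : ℝ,
      (1 / 2 * ∫ y in (0:ℝ)..W, ∫ x in (0:ℝ)..L,
        ((px ψb x y t₁) ^ 2 + (py ψb x y t₁) ^ 2 + (RS ^ 2)⁻¹ * (ψb x y t₁) ^ 2))
      = 1 / 2 * ∫ y in (0:ℝ)..W, ∫ x in (0:ℝ)..L,
        ((px ψb x y t₂) ^ 2 + (py ψb x y t₂) ^ 2 + (RS ^ 2)⁻¹ * (ψb x y t₂) ^ 2) := by
  intro t₁ t₂
  have hE : ∀ t, HasDerivAt (fun s => ∫ y in 0..W, ∫ x in 0..L, energyDensity RS ψb x y s) 0 t :=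
    fun t => by
      simpa only [integral_integral_pt_energyDensity_eq_zero hW.le hψb hψσ hψσ2 hperb hperσ hperσ2
        heqs (fun x => (hwalls x t 0 (by simp)).1) (fun x => (hwalls x t W (by simp)).1)
        (fun s => hcirc0 s t) (fun s => hcircW s t)] using
        (smooth3_energyDensity (RS := RS) hψb).hasDerivAt_integral_integral 0 L 0 W t
  exact congrArg (1 / 2 * ·) <|
    is_const_of_deriv_eq_zero (fun s => (hE s).differentiableAt) (fun s => (hE s).deriv) t₁ t₂

/-- Conservation of the energy `E = (1/2)∫∫ (|∇ψ̄|² + R_S⁻² ψ̄²)` along smooth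
`x`-periodic solutions of the IL⁽⁰'¹⁾QG equations with `∂ₓψ̄ = ∂ₓψσ = ∂ₓψσ² = 0`
on both channel walls and constant wall circulations. -/
theorem energy_conserved
    (L W β RS : ℝ) (hL : 0 < L) (hW : 0 < W) (hRS : 0 < RS)
    (ψb ψσ ψσ2 : ℝ → ℝ → ℝ → ℝ)
    (hψb : Smooth3 ψb) (hψσ : Smooth3 ψσ) (hψσ2 : Smooth3 ψσ2)
    (hperb : PeriodicX L ψb) (hperσ : PeriodicX L ψσ) (hperσ2 : PeriodicX L ψσ2)
    (heqs : IL01QG RS β W ψb ψσ ψσ2)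
    (hwalls : ∀ x t : ℝ, ∀ yw ∈ ({0, W} : Set ℝ),
      px ψb x yw t = 0 ∧ px ψσ x yw t = 0 ∧ px ψσ2 x yw t = 0)
    (hcirc0 : ∀ t₁ t₂ : ℝ,
      (∫ x in (0:ℝ)..L, py ψb x 0 t₁) = ∫ x in (0:ℝ)..L, py ψb x 0 t₂)
    (hcircW : ∀ t₁ t₂ : ℝ,
      (∫ x in (0:ℝ)..L, py ψb x W t₁) = ∫ x in (0:ℝ)..L, py ψb x W t₂) :
    ∀ t₁ t₂ : ℝ,
      (1 / 2 * ∫ y in (0:ℝ)..W, ∫ x in (0:ℝ)..L,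
        ((px ψb x y t₁) ^ 2 + (py ψb x y t₁) ^ 2 + (RS ^ 2)⁻¹ * (ψb x y t₁) ^ 2))
      = 1 / 2 * ∫ y in (0:ℝ)..W, ∫ x in (0:ℝ)..L,
        ((px ψb x y t₂) ^ 2 + (py ψb x y t₂) ^ 2 + (RS ^ 2)⁻¹ * (ψb x y t₂) ^ 2) :=
  energy_conserved_general L W β RS hW ψb ψσ ψσ2 hψb hψσ hψσ2 hperb hperσ hperσ2 heqs hwalls hcirc0
    hcircW
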